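/- (Symmetry of terminating Gauss hypergeometric sums) Let n be a natural number and let α, β be real numbers such that α+1 and β+1 are not nonpositive integers ≥ −n+1 (so all shifted factorials (α+1)_k, (β+1)_k for 0 ≤ k ≤ n are nonzero). Then for every real z: ∑_{k=0}^{n} [(−n)_k (n+α+β+1)_k / ((α+1)_k k!)] z^k = (−1)^n (β+1)_n / (α+1)_n · ∑_{k=0}^{n} [(−n)_k (n+α+β+1)_k / ((β+1)_k k!)] (1−z)^k. -/

import Mathlib

/-- The shifted factorial (Pochhammer symbol) `(a)ₖ = a(a+1)⋯(a+k−1)`. -/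
def shiftedFactorial (a : ℝ) (k : ℕ) : ℝ := ∏ i ∈ Finset.range k, (a + i)

namespace TGSAux

/-- Descending factorial `x(x−1)⋯(x−k+1)`. -/
def desc (x : ℝ) (k : ℕ) : ℝ := ∏ i ∈ Finset.range k, (x - i)

lemma desc_smeval (x : ℝ) (k : ℕ) : desc x k = (descPochhammer ℤ k).smeval x := by
  induction k with
  | zero => simp [desc]
  | succ k ih =>
    rw [desc, Finset.prod_range_succ, ← desc, ih, descPochhammer_succ_right,
      Polynomial.smeval_mul, Polynomial.smeval_sub, Polynomial.smeval_X,
      Polynomial.smeval_natCast]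
    simp

lemma desc_vandermonde (x y : ℝ) (N : ℕ) :
    ∑ m ∈ Finset.range (N + 1), (N.choose m : ℝ) * (desc x m * desc y (N - m)) =
      desc (x + y) N := by
  rw [desc_smeval, Ring.descPochhammer_smeval_add N (Commute.all x y),
    Finset.Nat.sum_antidiagonal_eq_sum_range_succ_mk]
  simp [desc_smeval]

lemma sf_add (a : ℝ) (j m : ℕ) :
    shiftedFactorial a (j + m) = shiftedFactorial a j * shiftedFactorial (a + j) m := by
  rw [shiftedFactorial, Finset.prod_range_add]
  congr 1
  exact Finset.prod_congr rfl fun i _ => by push_cast; ring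

lemma sf_neg (x : ℝ) (k : ℕ) : shiftedFactorial (-x) k = (-1) ^ k * desc x k := by
  rw [shiftedFactorial, desc]
  calc ∏ i ∈ Finset.range k, (-x + (i : ℝ))
      = ∏ i ∈ Finset.range k, (-1 : ℝ) * (x - i) :=
        Finset.prod_congr rfl fun i _ => by ring
    _ = (-1) ^ k * ∏ i ∈ Finset.range k, (x - (i : ℝ)) := by
        rw [Finset.prod_mul_distrib, Finset.prod_const, Finset.card_range]

lemma desc_reflect (y : ℝ) (k : ℕ) : desc y k = shiftedFactorial (y - k + 1) k := by
  rw [shiftedFactorial, desc, ← Finset.prod_range_reflect (fun i => y - i) k]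
  refine Finset.prod_congr rfl fun i hi => ?_
  have hik : i < k := Finset.mem_range.mp hi
  have h1 : k - 1 - i = k - (1 + i) := by omega
  have h2 : 1 + i ≤ k := by omega
  rw [h1, Nat.cast_sub h2]
  push_cast
  ring

lemma desc_nat (N m : ℕ) (h : m ≤ N) :
    desc (N : ℝ) m = (N.descFactorial m : ℝ) := by
  induction m with
  | zero => simp [desc]
  | succ m ih =>
    have hm : m ≤ N := Nat.le_of_succ_le h
    rw [desc, Finset.prod_range_succ, ← desc, ih hm, Nat.descFactorial_succ]
    rw [Nat.cast_mul, Nat.cast_sub hm]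
    ring

lemma sf_negN (N m : ℕ) (h : m ≤ N) :
    shiftedFactorial (-(N : ℝ)) m
      = (-1) ^ m * (Nat.factorial m : ℝ) * (N.choose m : ℝ) := by
  rw [sf_neg, desc_nat N m h, Nat.descFactorial_eq_factorial_mul_choose]
  push_cast
  ring

lemma sf_ne_zero_of_le {c : ℝ} {m N : ℕ} (h : m ≤ N) (hc : shiftedFactorial c N ≠ 0) :
    shiftedFactorial c m ≠ 0 := by
  obtain ⟨d, rfl⟩ := Nat.exists_eq_add_of_le h
  rw [sf_add] at hc
  exact left_ne_zero_of_mul hc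

/-- Chu–Vandermonde for terminating ₂F₁ at 1. -/
lemma chu (N : ℕ) (b c : ℝ) (hc : shiftedFactorial c N ≠ 0) :
    ∑ m ∈ Finset.range (N + 1),
        shiftedFactorial (-(N : ℝ)) m * shiftedFactorial b m /
          (shiftedFactorial c m * (Nat.factorial m : ℝ))
      = shiftedFactorial (c - b) N / shiftedFactorial c N := by
  rw [eq_div_iff hc, Finset.sum_mul]
  have key : ∀ m ∈ Finset.range (N + 1),
      shiftedFactorial (-(N : ℝ)) m * shiftedFactorial b m /
          (shiftedFactorial c m * (Nat.factorial m : ℝ)) * shiftedFactorial c N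
        = (N.choose m : ℝ) * (desc (-b) m * desc (c + N - 1) (N - m)) := by
    intro m hm
    have hmN : m ≤ N := Nat.lt_succ_iff.mp (Finset.mem_range.mp hm)
    have hcN : shiftedFactorial c N
        = shiftedFactorial c m * shiftedFactorial (c + m) (N - m) := by
      rw [← sf_add, Nat.add_sub_cancel' hmN]
    have hcm : shiftedFactorial c m ≠ 0 := sf_ne_zero_of_le hmN hc
    have hfm : (Nat.factorial m : ℝ) ≠ 0 := Nat.cast_ne_zero.mpr m.factorial_ne_zero
    have hb2 : desc (-b) m = (-1) ^ m * shiftedFactorial b m := by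
      have hb := sf_neg (-b) m
      rw [neg_neg] at hb
      rw [hb, ← mul_assoc, ← pow_add]
      rw [Even.neg_one_pow ⟨m, rfl⟩, one_mul]
    have hD2 : shiftedFactorial (c + m) (N - m) = desc (c + N - 1) (N - m) := by
      rw [desc_reflect]
      congr 1
      rw [Nat.cast_sub hmN]
      ring
    rw [hcN, sf_negN N m hmN, hb2, ← hD2]
    have hsq : ((-1 : ℝ)) ^ m * ((-1 : ℝ)) ^ m = 1 := by
      rw [← pow_add]; exact Even.neg_one_pow ⟨m, rfl⟩
    rcases Nat.even_or_odd m with hme | hme <;>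
      simp only [hme.neg_one_pow] <;> field_simp <;> ring
  rw [Finset.sum_congr rfl key, desc_vandermonde, desc_reflect]
  congr 1
  ring

end TGSAux

open TGSAux in
/-- **Symmetry of the terminating Gauss hypergeometric sum** -/
theorem terminating_gauss_symmetry
    (n : ℕ) (α β : ℝ)
    (hα : ∀ k : ℕ, k ≤ n → shiftedFactorial (α + 1) k ≠ 0)
    (hβ : ∀ k : ℕ, k ≤ n → shiftedFactorial (β + 1) k ≠ 0) :
    ∀ z : ℝ,
      ∑ k ∈ Finset.range (n + 1),
          shiftedFactorial (-(n : ℝ)) k * shiftedFactorial ((n : ℝ) + α + β + 1) k /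
            (shiftedFactorial (α + 1) k * (Nat.factorial k : ℝ)) * z ^ k =
        (-1) ^ n * shiftedFactorial (β + 1) n / shiftedFactorial (α + 1) n *
          ∑ k ∈ Finset.range (n + 1),
            shiftedFactorial (-(n : ℝ)) k * shiftedFactorial ((n : ℝ) + α + β + 1) k /
              (shiftedFactorial (β + 1) k * (Nat.factorial k : ℝ)) * (1 - z) ^ k := by
  intro z
  set A : ℝ := (n : ℝ) + α + β + 1 with hA
  set B : ℕ → ℝ := fun k =>
    shiftedFactorial (-(n : ℝ)) k * shiftedFactorial A k /
      (shiftedFactorial (β + 1) k * (Nat.factorial k : ℝ)) with hB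
  set C : ℝ := (-1) ^ n * shiftedFactorial (β + 1) n / shiftedFactorial (α + 1) n with hC
  -- Step 1: expand (1-z)^k and swap sums
  have e1 : ∀ k ∈ Finset.range (n + 1),
      B k * (1 - z) ^ k
        = ∑ j ∈ Finset.range (n + 1),
            B k * ((k.choose j : ℝ) * ((-1) ^ j * z ^ j)) := by
    intro k hk
    have hkn : k ≤ n := Nat.lt_succ_iff.mp (Finset.mem_range.mp hk)
    have hpow : (1 - z) ^ k
        = ∑ j ∈ Finset.range (k + 1), (-z) ^ j * 1 ^ (k - j) * (k.choose j : ℝ) := by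
      rw [show (1 : ℝ) - z = -z + 1 by ring, add_pow]
    calc B k * (1 - z) ^ k
        = ∑ j ∈ Finset.range (k + 1),
            B k * ((-z) ^ j * 1 ^ (k - j) * (k.choose j : ℝ)) := by
          rw [hpow, Finset.mul_sum]
      _ = ∑ j ∈ Finset.range (n + 1),
            B k * ((-z) ^ j * 1 ^ (k - j) * (k.choose j : ℝ)) := by
          refine Finset.sum_subset (Finset.range_subset_range.mpr (Nat.succ_le_succ hkn)) ?_
          intro j hj hj2
          have hkj : k < j := by
            simp only [Finset.mem_range, not_lt] at hj2
            omega
          simp [Nat.choose_eq_zero_of_lt hkj]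
      _ = ∑ j ∈ Finset.range (n + 1),
            B k * ((k.choose j : ℝ) * ((-1) ^ j * z ^ j)) := by
          refine Finset.sum_congr rfl fun j _ => ?_
          rw [neg_pow]
          ring
  have swap : C * ∑ k ∈ Finset.range (n + 1), B k * (1 - z) ^ k
      = ∑ j ∈ Finset.range (n + 1),
          (C * ((-1) ^ j * ∑ k ∈ Finset.range (n + 1), B k * (k.choose j : ℝ))) * z ^ j := by
    rw [Finset.sum_congr rfl e1, Finset.sum_comm]
    rw [Finset.mul_sum]
    refine Finset.sum_congr rfl fun j _ => ?_
    simp only [Finset.mul_sum, Finset.sum_mul]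
    refine Finset.sum_congr rfl fun k _ => ?_
    ring
  rw [swap]
  refine Finset.sum_congr rfl fun j hj => ?_
  have hjn : j ≤ n := Nat.lt_succ_iff.mp (Finset.mem_range.mp hj)
  congr 1
  -- nonzeroness
  have hcast : ((n - j : ℕ) : ℝ) = (n : ℝ) - j := Nat.cast_sub hjn
  have hsplitβ : shiftedFactorial (β + 1) n
      = shiftedFactorial (β + 1) j * shiftedFactorial (β + 1 + j) (n - j) := by
    rw [← sf_add, Nat.add_sub_cancel' hjn]
  have hsplitα : shiftedFactorial (α + 1) n
      = shiftedFactorial (α + 1) j * shiftedFactorial (α + 1 + j) (n - j) := by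
    rw [← sf_add, Nat.add_sub_cancel' hjn]
  have hb2 : shiftedFactorial (β + 1 + j) (n - j) ≠ 0 := by
    have h := hβ n le_rfl
    rw [hsplitβ] at h
    exact right_ne_zero_of_mul h
  have ha2 : shiftedFactorial (α + 1 + j) (n - j) ≠ 0 := by
    have h := hα n le_rfl
    rw [hsplitα] at h
    exact right_ne_zero_of_mul h
  have ha1 : shiftedFactorial (α + 1) j ≠ 0 := hα j hjn
  have hb1 : shiftedFactorial (β + 1) j ≠ 0 := hβ j hjn
  have hfj : (Nat.factorial j : ℝ) ≠ 0 := Nat.cast_ne_zero.mpr j.factorial_ne_zero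
  -- reindex the inner sum
  have hSum : ∑ k ∈ Finset.range (n + 1), B k * (k.choose j : ℝ)
      = ∑ m ∈ Finset.range (n - j + 1), B (j + m) * ((j + m).choose j : ℝ) := by
    have h1 : ∑ k ∈ Finset.range (n + 1), B k * (k.choose j : ℝ)
        = ∑ k ∈ Finset.Ico j (n + 1), B k * (k.choose j : ℝ) := by
      refine (Finset.sum_subset ?_ ?_).symm
      · rw [Finset.range_eq_Ico]
        exact Finset.Ico_subset_Ico (Nat.zero_le j) le_rfl
      · intro k hk hk2
        have hkj : k < j := by
          simp only [Finset.mem_Ico, Finset.mem_range, not_and, not_le, not_lt] at hk hk2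
          omega
        simp [Nat.choose_eq_zero_of_lt hkj]
    rw [h1, Finset.sum_Ico_eq_sum_range, show n + 1 - j = n - j + 1 by omega]
  -- rewrite each term of the reindexed sum
  have hterm : ∀ m ∈ Finset.range (n - j + 1),
      B (j + m) * ((j + m).choose j : ℝ)
        = (shiftedFactorial (-(n : ℝ)) j * shiftedFactorial A j /
            (shiftedFactorial (β + 1) j * (Nat.factorial j : ℝ))) *
          (shiftedFactorial (-((n - j : ℕ) : ℝ)) m * shiftedFactorial (A + j) m /
            (shiftedFactorial (β + 1 + j) m * (Nat.factorial m : ℝ))) := by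
    intro m hm
    have hmnj : m ≤ n - j := Nat.lt_succ_iff.mp (Finset.mem_range.mp hm)
    have hbm : shiftedFactorial (β + 1 + j) m ≠ 0 := sf_ne_zero_of_le hmnj hb2
    have hfm : (Nat.factorial m : ℝ) ≠ 0 := Nat.cast_ne_zero.mpr m.factorial_ne_zero
    have hneg : -(((n : ℝ))) + j = -(((n - j : ℕ) : ℝ)) := by rw [hcast]; ring
    rw [hB]
    simp only
    rw [sf_add (-(n : ℝ)) j m, sf_add A j m, sf_add (β + 1) j m, hneg,
      Nat.cast_add_choose]
    have hfjm : ((j + m).factorial : ℝ) ≠ 0 :=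
      Nat.cast_ne_zero.mpr (j + m).factorial_ne_zero
    field_simp
  -- apply Chu–Vandermonde
  have hchu := chu (n - j) (A + j) (β + 1 + j) hb2
  have hcb : shiftedFactorial (β + 1 + j - (A + j)) (n - j)
      = (-1) ^ (n - j) * shiftedFactorial (α + 1 + j) (n - j) := by
    have h1 : β + 1 + (j : ℝ) - (A + j) = -((n : ℝ) + α) := by rw [hA]; ring
    rw [h1, sf_neg, desc_reflect]
    congr 2
    rw [hcast]
    ring
  rw [hSum, Finset.sum_congr rfl hterm, ← Finset.mul_sum, hchu, hcb]
  -- final algebraic identity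
  have hpowj : ((-1 : ℝ)) ^ (n - j) = (-1) ^ n * (-1) ^ j := by
    have h2 : ((-1 : ℝ)) ^ j * ((-1 : ℝ)) ^ j = 1 := by
      rw [← pow_add]; exact Even.neg_one_pow ⟨j, rfl⟩
    calc ((-1 : ℝ)) ^ (n - j)
        = (-1) ^ (n - j) * ((-1) ^ j * (-1) ^ j) := by rw [h2, mul_one]
      _ = (-1) ^ (n - j + j) * (-1) ^ j := by rw [pow_add]; ring
      _ = (-1) ^ n * (-1) ^ j := by rw [Nat.sub_add_cancel hjn]
  rw [hC, hsplitβ, hsplitα, hpowj]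
  rcases Nat.even_or_odd n with hn | hn <;> rcases Nat.even_or_odd j with hj2 | hj2 <;>
    simp only [hn.neg_one_pow, hj2.neg_one_pow] <;>
    field_simp <;>
    ring
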